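/- arXiv:1412.3362 — 6 statements merged into one kernel-verified Lean document; each statement's English description precedes it below -/
import Mathlib

section
/- Fix α ∈ (0,1). For each integer N ≥ 2 set q = 1/N, define K₀(N) = ⌊ln α / ln(1 − q)⌋ (a nonnegative integer) and ρ₀(N) = 1 − α·(1 − q)^{−K₀(N)}, so that α = (1 − ρ₀(N))(1 − q)^{K₀(N)} with ρ₀(N) ∈ [0, q). Then the variance of the central limit theorem for adaptive multilevel splitting, σ_N² = α² ( K₀(N)·q/(1 − q) + ρ₀(N)/(1 − ρ₀(N)) ), converges to −α² ln α as N → ∞. -/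
open Real Filter

/-- Killing proportion `q = 1/N` of the last particle method. -/
noncomputable def amsQ (N : ℕ) : ℝ := 1 / N

/-- `K₀(N) = ⌊ln α / ln(1 − 1/N)⌋`. -/
noncomputable def amsK0 (α : ℝ) (N : ℕ) : ℕ :=
  ⌊Real.log α / Real.log (1 - amsQ N)⌋₊

/-- `ρ₀(N) = 1 − α (1 − 1/N)^{−K₀(N)}`. -/
noncomputable def amsRho0 (α : ℝ) (N : ℕ) : ℝ :=
  1 - α * (1 - amsQ N) ^ (-(amsK0 α N : ℤ))

/-- The CLT variance
`σ_N² = α² ( K₀(N) q/(1−q) + ρ₀(N)/(1−ρ₀(N)) )` with `q = 1/N`. -/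
noncomputable def amsVar (α : ℝ) (N : ℕ) : ℝ :=
  α ^ 2 * ((amsK0 α N : ℝ) * amsQ N / (1 - amsQ N) +
    amsRho0 α N / (1 - amsRho0 α N))

/-! With `β = 1 - q`, `K₀ = ⌊log α / log β⌋₊` is the integer with `β ^ (K₀ + 1) < α ≤ β ^ K₀`,
which is exactly `ρ₀ ∈ [0, q)`. Since `N log (1 - 1/N) → -1`, the real number `log α / log β`
is `-N log α + o(N)`, and taking the floor changes it by less than `1`; hence `K₀ q → -log α`,
while `0 ≤ ρ₀ < q` forces `ρ₀ → 0`. -/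

open Topology

section FloorLog

variable {α β : ℝ}

lemma le_pow_iff_natCast_le_log_div_log (hα : 0 < α) (hβ0 : 0 < β) (hβ1 : β < 1) (n : ℕ) :
    α ≤ β ^ n ↔ (n : ℝ) ≤ log α / log β := by
  rw [le_div_iff_of_neg (log_neg hβ0 hβ1), ← log_pow, log_le_log_iff hα (pow_pos hβ0 n)]

lemma le_pow_natFloor_log_div_log (hα0 : 0 < α) (hα1 : α ≤ 1) (hβ0 : 0 < β) (hβ1 : β < 1) :
    α ≤ β ^ ⌊log α / log β⌋₊ :=
  (le_pow_iff_natCast_le_log_div_log hα0 hβ0 hβ1 _).2 <|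
    Nat.floor_le (div_nonneg_of_nonpos (log_nonpos hα0.le hα1) (log_neg hβ0 hβ1).le)

lemma pow_natFloor_log_div_log_succ_lt (hα : 0 < α) (hβ0 : 0 < β) (hβ1 : β < 1) :
    β ^ (⌊log α / log β⌋₊ + 1) < α := by
  rw [← not_le, le_pow_iff_natCast_le_log_div_log hα hβ0 hβ1, not_le, Nat.cast_succ]
  exact Nat.lt_floor_add_one _

lemma one_sub_div_pow_natFloor_log_div_log_mem_Ico (hα0 : 0 < α) (hα1 : α ≤ 1)
    (hβ0 : 0 < β) (hβ1 : β < 1) :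
    1 - α / β ^ ⌊log α / log β⌋₊ ∈ Set.Ico 0 (1 - β) := by
  have hpow : 0 < β ^ ⌊log α / log β⌋₊ := pow_pos hβ0 _
  constructor
  · rw [sub_nonneg, div_le_one hpow]
    exact le_pow_natFloor_log_div_log hα0 hα1 hβ0 hβ1
  · rw [sub_lt_sub_iff_left, lt_div_iff₀' hpow, ← pow_succ]
    exact pow_natFloor_log_div_log_succ_lt hα0 hβ0 hβ1

end FloorLog

lemma tendsto_natFloor_div_natCast {a : ℕ → ℝ} {L : ℝ} (ha : ∀ᶠ n in atTop, 0 ≤ a n)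
    (h : Tendsto (fun n ↦ a n / n) atTop (𝓝 L)) :
    Tendsto (fun n ↦ (⌊a n⌋₊ : ℝ) / n) atTop (𝓝 L) := by
  have hlow : Tendsto (fun n : ℕ ↦ (a n - 1) / n) atTop (𝓝 L) := by
    simpa [sub_div] using h.sub tendsto_one_div_atTop_nhds_zero_nat
  refine tendsto_of_tendsto_of_tendsto_of_le_of_le' hlow h ?_ ?_
  · filter_upwards with n
    exact div_le_div_of_nonneg_right (by linarith [Nat.lt_floor_add_one (a n)]) n.cast_nonneg
  · filter_upwards [ha] with n hn
    exact div_le_div_of_nonneg_right (Nat.floor_le hn) n.cast_nonneg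

lemma tendsto_natCast_mul_log_one_sub_one_div :
    Tendsto (fun N : ℕ ↦ (N : ℝ) * log (1 - 1 / N)) atTop (𝓝 (-1)) := by
  convert (tendsto_mul_log_one_add_div_atTop (-1)).comp tendsto_natCast_atTop_atTop using 2
  simp [neg_div, sub_eq_add_neg]

lemma tendsto_div_log_one_sub_one_div_div_natCast (c : ℝ) :
    Tendsto (fun N : ℕ ↦ c / log (1 - 1 / N) / N) atTop (𝓝 (-c)) := by
  convert (tendsto_const_nhds (x := c)).div tendsto_natCast_mul_log_one_sub_one_div (neg_ne_zero.2 one_ne_zero)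
    using 1
  · ext N; rw [div_div, mul_comm]; rfl
  · rw [div_neg, div_one]

lemma one_sub_amsQ_mem_Ioo {N : ℕ} (hN : 2 ≤ N) : 1 - amsQ N ∈ Set.Ioo 0 1 := by
  have hN1 : (1 : ℝ) < N := by exact_mod_cast hN
  have hq0 : 0 < amsQ N := by unfold amsQ; positivity
  have hq1 : amsQ N < 1 := (div_lt_one (by linarith)).2 hN1
  constructor <;> linarith

lemma amsRho0_eq (α : ℝ) (N : ℕ) : amsRho0 α N = 1 - α / (1 - amsQ N) ^ amsK0 α N := by
  rw [amsRho0, zpow_neg, zpow_natCast, div_eq_mul_inv]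

lemma eq_one_sub_amsRho0_mul_pow {α : ℝ} {N : ℕ} (hN : 2 ≤ N) :
    α = (1 - amsRho0 α N) * (1 - amsQ N) ^ amsK0 α N := by
  rw [amsRho0_eq, sub_sub_cancel, div_mul_cancel₀ _ (pow_ne_zero _ (one_sub_amsQ_mem_Ioo hN).1.ne')]

lemma amsRho0_mem_Ico {α : ℝ} (hα : α ∈ Set.Ioo 0 1) {N : ℕ} (hN : 2 ≤ N) :
    amsRho0 α N ∈ Set.Ico 0 (amsQ N) := by
  obtain ⟨hβ0, hβ1⟩ := one_sub_amsQ_mem_Ioo hN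
  simpa [amsRho0_eq, amsK0] using
    one_sub_div_pow_natFloor_log_div_log_mem_Ico hα.1 hα.2.le hβ0 hβ1

lemma tendsto_amsRho0 {α : ℝ} (hα : α ∈ Set.Ioo 0 1) :
    Tendsto (amsRho0 α) atTop (𝓝 0) := by
  have hbounds : ∀ᶠ N in atTop, amsRho0 α N ∈ Set.Ico 0 (amsQ N) :=
    (eventually_ge_atTop 2).mono fun _ ↦ amsRho0_mem_Ico hα
  exact tendsto_of_tendsto_of_tendsto_of_le_of_le' tendsto_const_nhds
    tendsto_one_div_atTop_nhds_zero_nat (hbounds.mono fun _ h ↦ h.1) (hbounds.mono fun _ h ↦ h.2.le)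

lemma tendsto_amsK0_div_natCast {α : ℝ} (hα : α ∈ Set.Ioo 0 1) :
    Tendsto (fun N : ℕ ↦ (amsK0 α N : ℝ) / N) atTop (𝓝 (-log α)) := by
  refine tendsto_natFloor_div_natCast (.of_forall fun N ↦ ?_)
    (tendsto_div_log_one_sub_one_div_div_natCast (log α))
  have hq0 : 0 ≤ amsQ N := by unfold amsQ; positivity
  have hq1 : amsQ N ≤ 1 := by rw [amsQ, one_div]; exact Nat.cast_inv_le_one N
  exact div_nonneg_of_nonpos (log_nonpos hα.1.le hα.2.le) (log_nonpos (by linarith) (by linarith))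

/-- For `α ∈ (0,1)` and `q = 1/N`: the pair `(ρ₀(N), K₀(N))` satisfies
`α = (1 − ρ₀(N))(1 − q)^{K₀(N)}` with `ρ₀(N) ∈ [0, q)`, and the CLT variance
`σ_N²` converges to `−α² ln α` as `N → ∞`. -/
theorem ams_variance_last_particle_limit (α : ℝ) (hα : α ∈ Set.Ioo (0 : ℝ) 1) :
    (∀ N : ℕ, 2 ≤ N →
      α = (1 - amsRho0 α N) * (1 - amsQ N) ^ amsK0 α N ∧
      amsRho0 α N ∈ Set.Ico (0 : ℝ) (amsQ N)) ∧
    Tendsto (fun N : ℕ => amsVar α N) atTop (nhds (-(α ^ 2) * Real.log α)) := by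
  refine ⟨fun N hN ↦ ⟨eq_one_sub_amsRho0_mul_pow hN, amsRho0_mem_Ico hα hN⟩, ?_⟩
  have hq : Tendsto amsQ atTop (𝓝 0) := tendsto_one_div_atTop_nhds_zero_nat
  have hρ := tendsto_amsRho0 hα
  have hK := (tendsto_amsK0_div_natCast hα).div ((tendsto_const_nhds (x := (1 : ℝ))).sub hq) (by simp)
  have hlim := (hK.add (hρ.div ((tendsto_const_nhds (x := (1 : ℝ))).sub hρ) (by simp))).const_mul (α ^ 2)
  convert hlim using 2 with N
  · simp only [amsVar, amsQ, mul_one_div, Pi.div_apply]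
  · simp
end

section
/- Let A, B, C > 0 with A + B ≠ C, and define f(t) = (BC/(A+B−C))(e^{−Ct} − e^{−(A+B)t}) + A e^{−(A+B)t} for t ≥ 0. Then f(t) ≥ 0 for all t ≥ 0 and ∫₀^∞ f(t) dt = 1; i.e. f is a probability density on [0, ∞). -/
open Real MeasureTheory

lemma expint_aux (c : ℝ) (hc : 0 < c) :
    ∫ x in Set.Ioi (0 : ℝ), Real.exp (-c * x) = 1 / c := by
  have h := integral_exp_neg_mul_rpow (p := 1) one_pos hc
  simp only [Real.rpow_one] at h
  rw [h]
  norm_num [Real.Gamma_two, Real.rpow_neg_one, one_div]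

/-- The duration density of the three-level model,
`f(t) = (BC/(A+B−C))(e^{−Ct} − e^{−(A+B)t}) + A e^{−(A+B)t}`,
is nonnegative on `[0,∞)` and integrates to `1` over `(0,∞)`:
it is a probability density on `[0, ∞)`. -/
theorem three_level_density_is_probability_density (A B C : ℝ)
    (hA : 0 < A) (hB : 0 < B) (hC : 0 < C) (hABC : A + B ≠ C)
    (f : ℝ → ℝ)
    (hf : f = fun t => B * C / (A + B - C) *
      (Real.exp (-C * t) - Real.exp (-(A + B) * t)) + A * Real.exp (-(A + B) * t)) :
    (∀ t : ℝ, 0 ≤ t → 0 ≤ f t) ∧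
    (∫ t in Set.Ioi (0 : ℝ), f t) = 1 := by
  have hAB : 0 < A + B := by linarith
  constructor
  · intro t ht
    subst hf
    simp only
    have h2 : 0 ≤ A * Real.exp (-(A + B) * t) := by positivity
    rcases lt_or_gt_of_ne (sub_ne_zero.mpr hABC) with hlt | hgt
    · -- A + B - C < 0, so -C*t ≤ -(A+B)*t
      have hd : Real.exp (-C * t) - Real.exp (-(A + B) * t) ≤ 0 := by
        have : -C * t ≤ -(A + B) * t := by nlinarith
        simpa using Real.exp_le_exp.mpr this
      have : 0 ≤ B * C / (A + B - C) *
          (Real.exp (-C * t) - Real.exp (-(A + B) * t)) := by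
        rw [div_mul_eq_mul_div]
        exact div_nonneg_iff.mpr (Or.inr ⟨mul_nonpos_iff.mpr (Or.inl ⟨by positivity, hd⟩), by linarith⟩)
      linarith
    · have hd : 0 ≤ Real.exp (-C * t) - Real.exp (-(A + B) * t) := by
        have : -(A + B) * t ≤ -C * t := by nlinarith
        simpa using Real.exp_le_exp.mpr this
      have : 0 ≤ B * C / (A + B - C) *
          (Real.exp (-C * t) - Real.exp (-(A + B) * t)) :=
        mul_nonneg (div_nonneg (by positivity) (by linarith)) hd
      linarith
  · subst hf
    have hiC : IntegrableOn (fun t : ℝ => Real.exp (-C * t)) (Set.Ioi 0) :=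
      exp_neg_integrableOn_Ioi 0 hC
    have hiAB : IntegrableOn (fun t : ℝ => Real.exp (-(A + B) * t)) (Set.Ioi 0) :=
      exp_neg_integrableOn_Ioi 0 hAB
    have key : (∫ t in Set.Ioi (0 : ℝ),
        (B * C / (A + B - C) * (Real.exp (-C * t) - Real.exp (-(A + B) * t))
          + A * Real.exp (-(A + B) * t)))
        = B * C / (A + B - C) * (1 / C - 1 / (A + B)) + A * (1 / (A + B)) := by
      have h1i : IntegrableOn (fun t : ℝ => B * C / (A + B - C) *
          (Real.exp (-C * t) - Real.exp (-(A + B) * t))) (Set.Ioi 0) :=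
        (hiC.sub hiAB).const_mul _
      have h2i : IntegrableOn (fun t : ℝ => A * Real.exp (-(A + B) * t)) (Set.Ioi 0) :=
        hiAB.const_mul _
      rw [integral_add h1i h2i,
        integral_const_mul, integral_const_mul,
        integral_sub hiC hiAB, expint_aux C hC, expint_aux (A + B) hAB]
    rw [key]
    have h1 : A + B - C ≠ 0 := sub_ne_zero.mpr hABC
    field_simp
    ring
end

section
/- Let A, B, C > 0 with A + B ≠ C, and define f(t) = (BC/(A+B−C))(e^{−Ct} − e^{−(A+B)t}) + A e^{−(A+B)t}. Then the mean duration of a reactive trajectory is τ = ∫₀^∞ t f(t) dt = (1/(A+B))·(1 + B/C). -/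
/-!
With `k = BC/(A+B−C)` the density is the two-exponential mixture
`f t = k e^{−Ct} + (A − k) e^{−(A+B)t}`, and `∫₀^∞ t e^{−rt} dt = Γ(2)/r² = 1/r²`,
so the mean is `k/C² + (A − k)/(A+B)²`, which simplifies to `(1 + B/C)/(A+B)`.
-/

open Real MeasureTheory Set

lemma integrableOn_Ioi_mul_exp_neg_mul {r : ℝ} (hr : 0 < r) :
    IntegrableOn (fun t : ℝ => t * exp (-r * t)) (Ioi 0) := by
  have h := integrableOn_rpow_mul_exp_neg_mul_rpow (p := 1) (s := 1) (by norm_num) one_pos hr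
  exact h.congr_fun (fun t _ => by simp) measurableSet_Ioi

lemma integral_Ioi_mul_exp_neg_mul {r : ℝ} (hr : 0 < r) :
    ∫ t in Ioi (0 : ℝ), t * exp (-r * t) = 1 / r ^ 2 := by
  have h := integral_rpow_mul_exp_neg_mul_Ioi (a := 2) two_pos hr
  norm_num [Gamma_two] at h
  simpa [neg_mul] using h

lemma integral_Ioi_mul_exp_mixture {r s : ℝ} (hr : 0 < r) (hs : 0 < s) (a b : ℝ) :
    ∫ t in Ioi (0 : ℝ), t * (a * exp (-r * t) + b * exp (-s * t)) = a / r ^ 2 + b / s ^ 2 := by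
  have hsplit : ∀ t : ℝ, t * (a * exp (-r * t) + b * exp (-s * t))
      = a * (t * exp (-r * t)) + b * (t * exp (-s * t)) := fun t => by ring
  simp_rw [hsplit]
  rw [integral_add ((integrableOn_Ioi_mul_exp_neg_mul hr).const_mul a)
      ((integrableOn_Ioi_mul_exp_neg_mul hs).const_mul b),
    integral_const_mul, integral_const_mul, integral_Ioi_mul_exp_neg_mul hr,
    integral_Ioi_mul_exp_neg_mul hs]
  ring

/-- The mean duration of a reactive trajectory in the three-level model:
`τ = ∫₀^∞ t f(t) dt = (1/(A+B)) (1 + B/C)`. -/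
theorem three_level_mean_duration (A B C : ℝ)
    (hA : 0 < A) (hB : 0 < B) (hC : 0 < C) (hABC : A + B ≠ C)
    (f : ℝ → ℝ)
    (hf : f = fun t => B * C / (A + B - C) *
      (Real.exp (-C * t) - Real.exp (-(A + B) * t)) + A * Real.exp (-(A + B) * t)) :
    (∫ t in Set.Ioi (0 : ℝ), t * f t) = 1 / (A + B) * (1 + B / C) := by
  set k := B * C / (A + B - C) with hk
  have hmixture : f = fun t => k * exp (-C * t) + (A - k) * exp (-(A + B) * t) := by
    rw [hf]; ext t; ring
  rw [hmixture, integral_Ioi_mul_exp_mixture hC (add_pos hA hB), hk]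
  have hSC : A + B - C ≠ 0 := sub_ne_zero.mpr hABC
  have hS : A + B ≠ 0 := (add_pos hA hB).ne'
  field_simp
  ring
end

section
/- Fix A, B > 0 and Λ > 0, and for C ∈ (0, A + B) define τ_Λ(C) = [(A−C)C + B(A+B)(1 − (1 + CΛ) e^{−CΛ})]/(C(A+B)(A+B−C)). Then, as C → 0⁺, τ_Λ(C) = (1/(A+B))·( A/(A+B) + C·B·(Λ²/2 − 1/(A+B)²) ) + O(C²); i.e. the cut-off mean duration is, to first order in the small rate C, an affine function of C with constant term A/(A+B)² and slope B(Λ²/2 − 1/(A+B)²)/(A+B). -/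
/-!
Write `S = A + B`. Since `1 - (1 + x) e^{-x} = x²/2 + O(x³)`, substituting `x = CΛ` turns the
numerator of `τ_Λ(C)` into `C (A - C) + B S (CΛ)²/2 + O(C³)`. After dividing by `C S (S - C)` the
polynomial part differs from the affine approximation by `B C² (Λ² S/2 - 1/S) / (S² (S - C))`, and
the remainder contributes `O(C³)/C = O(C²)`; both factors `1/(S - C)` stay bounded near `C = 0`.
-/

open Real Filter Asymptotics Topology

theorem exp_sub_quadratic_isBigO :
    (fun x : ℝ => exp x - (1 + x + x ^ 2 / 2)) =O[𝓝 0] (· ^ 3) := by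
  refine IsBigO.of_bound 1 ?_
  filter_upwards [Metric.closedBall_mem_nhds (0 : ℝ) one_pos] with x hx
  have hx : |x| ≤ 1 := by simpa using hx
  have h := Real.exp_bound hx (n := 3) (by norm_num)
  simp only [Finset.sum_range_succ, Finset.sum_range_zero] at h
  norm_num [Nat.factorial] at h
  rw [Real.norm_eq_abs, Real.norm_eq_abs, abs_pow]
  calc |exp x - (1 + x + x ^ 2 / 2)| ≤ |x| ^ 3 * (4 / 18) := by convert h using 2; ring
    _ ≤ 1 * |x| ^ 3 := by nlinarith [pow_nonneg (abs_nonneg x) 3]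

theorem one_sub_one_add_mul_exp_neg_sub_sq_isBigO :
    (fun x : ℝ => 1 - (1 + x) * exp (-x) - x ^ 2 / 2) =O[𝓝 0] (· ^ 3) := by
  have hR : (fun x : ℝ => exp (-x) - (1 + -x + (-x) ^ 2 / 2)) =O[𝓝 0] (· ^ 3) := by
    have h := exp_sub_quadratic_isBigO.comp_tendsto (continuous_neg.tendsto' (0 : ℝ) 0 neg_zero)
    simpa only [Function.comp_def, Odd.neg_pow (by decide : Odd 3), isBigO_neg_right] using h
  have hbdd : (fun x : ℝ => 1 + x) =O[𝓝 0] (fun _ => (1 : ℝ)) :=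
    ((continuous_const.add continuous_id).tendsto 0).isBigO_one ℝ
  have h := (isBigO_const_mul_self (-1 / 2 : ℝ) (· ^ 3) _).sub (by simpa using hbdd.mul hR)
  -- `(1 + x) (1 - x + x²/2) = 1 - x²/2 + x³/2`
  exact h.congr_left fun x => by ring

theorem isBigO_pow_comp_mul_const {f : ℝ → ℝ} {n : ℕ} (hf : f =O[𝓝 0] (· ^ n)) (Λ : ℝ) :
    (fun C => f (C * Λ)) =O[𝓝 0] (· ^ n) := by
  have h := hf.comp_tendsto ((continuous_mul_const Λ).tendsto' 0 0 (zero_mul Λ))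
  refine h.trans ((isBigO_const_mul_self (Λ ^ n) (· ^ n) _).congr_left fun C => ?_)
  simp only [Function.comp_def, mul_pow, mul_comm]

noncomputable def cutoffMeanDuration (A B Λ C : ℝ) : ℝ :=
  ((A - C) * C + B * (A + B) * (1 - (1 + C * Λ) * exp (-C * Λ))) /
    (C * (A + B) * (A + B - C))

theorem cutoffMeanDuration_sub_affine {A B Λ C : ℝ} (hS : A + B ≠ 0) (hC : C ≠ 0)
    (hSC : A + B - C ≠ 0) :
    cutoffMeanDuration A B Λ C -
        1 / (A + B) * (A / (A + B) + C * B * (Λ ^ 2 / 2 - 1 / (A + B) ^ 2)) =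
      C ^ 2 * (B * (Λ ^ 2 * (A + B) / 2 - 1 / (A + B)) / ((A + B) ^ 2 * (A + B - C))) +
        B / (A + B - C) * ((1 - (1 + C * Λ) * exp (-(C * Λ)) - (C * Λ) ^ 2 / 2) * C⁻¹) := by
  unfold cutoffMeanDuration
  rw [neg_mul]
  field_simp
  ring

theorem cutoffMeanDuration_sub_affine_isBigO {A B : ℝ} (hS : A + B ≠ 0) (Λ : ℝ) :
    (fun C => cutoffMeanDuration A B Λ C -
        1 / (A + B) * (A / (A + B) + C * B * (Λ ^ 2 / 2 - 1 / (A + B) ^ 2)))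
      =O[𝓝[≠] 0] (· ^ 2) := by
  have hSC : Tendsto (fun C => A + B - C) (𝓝[≠] 0) (𝓝 (A + B)) := by
    simpa using (tendsto_const_nhds.sub tendsto_id).mono_left (nhdsWithin_le_nhds (a := (0 : ℝ)))
  have hρ : (fun C => (1 - (1 + C * Λ) * exp (-(C * Λ)) - (C * Λ) ^ 2 / 2) * C⁻¹)
      =O[𝓝[≠] 0] (· ^ 2) := by
    have h := ((isBigO_pow_comp_mul_const one_sub_one_add_mul_exp_neg_sub_sq_isBigO Λ).mono
      nhdsWithin_le_nhds).mul (isBigO_refl (·⁻¹ : ℝ → ℝ) (𝓝[≠] 0))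
    refine h.congr_right fun C => ?_
    rcases eq_or_ne C 0 with rfl | hC
    · simp
    · field_simp
  have h₁ : (fun C => C ^ 2 * (B * (Λ ^ 2 * (A + B) / 2 - 1 / (A + B)) /
      ((A + B) ^ 2 * (A + B - C)))) =O[𝓝[≠] 0] (· ^ 2) := by
    simpa using (isBigO_refl (· ^ 2 : ℝ → ℝ) (𝓝[≠] 0)).mul
      ((tendsto_const_nhds.div (hSC.const_mul ((A + B) ^ 2)) (by simpa)).isBigO_one ℝ)
  have h₂ : (fun C => B / (A + B - C) *
      ((1 - (1 + C * Λ) * exp (-(C * Λ)) - (C * Λ) ^ 2 / 2) * C⁻¹)) =O[𝓝[≠] 0] (· ^ 2) := by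
    simpa using ((tendsto_const_nhds.div hSC hS).isBigO_one ℝ).mul hρ
  refine (h₁.add h₂).congr' ?_ .rfl
  filter_upwards [self_mem_nhdsWithin, hSC.eventually_ne hS] with C hC hSC
  exact (cutoffMeanDuration_sub_affine hS hC hSC).symm

theorem three_level_cutoff_mean_duration_small_C_general (A B Λ : ℝ)
    (hA : 0 < A) (hB : 0 < B)
    (τ : ℝ → ℝ)
    (hτ : τ = fun C => ((A - C) * C +
      B * (A + B) * (1 - (1 + C * Λ) * Real.exp (-C * Λ))) /
      (C * (A + B) * (A + B - C))) :
    (fun C : ℝ => τ C -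
        1 / (A + B) * (A / (A + B) + C * B * (Λ ^ 2 / 2 - 1 / (A + B) ^ 2)))
      =O[nhdsWithin 0 (Set.Ioi 0)] (fun C : ℝ => C ^ 2) := by
  subst hτ
  have hS : A + B ≠ 0 := (add_pos hA hB).ne'
  exact (cutoffMeanDuration_sub_affine_isBigO hS Λ).mono
    (nhdsWithin_mono _ fun _ hC => ne_of_gt hC)

/-- First-order expansion of the cut-off mean duration in the small escape rate `C`:
`τ_Λ(C) = (1/(A+B)) ( A/(A+B) + C B (Λ²/2 − 1/(A+B)²) ) + O(C²)` as `C → 0⁺`. -/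
theorem three_level_cutoff_mean_duration_small_C (A B Λ : ℝ)
    (hA : 0 < A) (hB : 0 < B) (hΛ : 0 < Λ)
    (τ : ℝ → ℝ)
    (hτ : τ = fun C => ((A - C) * C +
      B * (A + B) * (1 - (1 + C * Λ) * Real.exp (-C * Λ))) /
      (C * (A + B) * (A + B - C))) :
    (fun C : ℝ => τ C -
        1 / (A + B) * (A / (A + B) + C * B * (Λ ^ 2 / 2 - 1 / (A + B) ^ 2)))
      =O[nhdsWithin 0 (Set.Ioi 0)] (fun C : ℝ => C ^ 2) :=
  three_level_cutoff_mean_duration_small_C_general A B Λ hA hB τ hτ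
end

section
/- Let Λ > 0 satisfy 2Λ² > 1, and define g(β) = (β/2)·(1/2 + Λ²/(β e^{β})) = β/4 + Λ²/(2 e^{β}) for β > 0. Then g attains a strict global minimum on (0, ∞) at β_i = 2 ln Λ + ln 2: g is strictly decreasing on (0, β_i) and strictly increasing on (β_i, ∞). -/
open Real Set

/-!
Writing `g β = β/4 + (Λ²/2) e^{-β}`, the derivative `1/4 - (Λ²/2) e^{-β}` has the same sign as
`β - log (2Λ²)`, and `log (2Λ²) = 2 ln Λ + ln 2` is exactly `β_i`.
-/

namespace Real

theorem hasDerivAt_mul_add_div_exp (a b x : ℝ) :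
    HasDerivAt (fun x => a * x + b / exp x) (a - b / exp x) x := by
  refine (((hasDerivAt_id' x).const_mul a).add
    ((hasDerivAt_const x b).div (hasDerivAt_exp x) (exp_pos x).ne')).congr_deriv ?_
  field_simp
  ring

theorem deriv_mul_add_div_exp (a b x : ℝ) :
    deriv (fun x => a * x + b / exp x) x = a - b / exp x :=
  (hasDerivAt_mul_add_div_exp a b x).deriv

theorem continuous_mul_add_div_exp (a b : ℝ) : Continuous fun x => a * x + b / exp x := by
  fun_prop (disch := exact fun x => (exp_pos x).ne')

variable {a b : ℝ}

theorem div_exp_lt_iff_log_div_lt (ha : 0 < a) (hb : 0 < b) {x : ℝ} :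
    b / exp x < a ↔ log (b / a) < x := by
  rw [log_lt_iff_lt_exp (div_pos hb ha), div_lt_iff₀ (exp_pos x), div_lt_iff₀ ha, mul_comm]

theorem lt_div_exp_iff_lt_log_div (ha : 0 < a) (hb : 0 < b) {x : ℝ} :
    a < b / exp x ↔ x < log (b / a) := by
  rw [lt_log_iff_exp_lt (div_pos hb ha), lt_div_iff₀ (exp_pos x), lt_div_iff₀' ha]

theorem strictMonoOn_mul_add_div_exp (ha : 0 < a) (hb : 0 < b) :
    StrictMonoOn (fun x => a * x + b / exp x) (Ici (log (b / a))) := by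
  refine strictMonoOn_of_deriv_pos (convex_Ici _) (continuous_mul_add_div_exp a b).continuousOn
    fun x hx => ?_
  rw [interior_Ici] at hx
  rw [deriv_mul_add_div_exp, sub_pos]
  exact (div_exp_lt_iff_log_div_lt ha hb).2 hx

theorem strictAntiOn_mul_add_div_exp (ha : 0 < a) (hb : 0 < b) :
    StrictAntiOn (fun x => a * x + b / exp x) (Iic (log (b / a))) := by
  refine strictAntiOn_of_deriv_neg (convex_Iic _) (continuous_mul_add_div_exp a b).continuousOn
    fun x hx => ?_
  rw [interior_Iic] at hx
  rw [deriv_mul_add_div_exp, sub_neg]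
  exact (lt_div_exp_iff_lt_log_div ha hb).2 hx

end Real

theorem lt_of_strictAntiOn_Iic_of_strictMonoOn_Ici {f : ℝ → ℝ} {x₀ : ℝ}
    (hanti : StrictAntiOn f (Iic x₀)) (hmono : StrictMonoOn f (Ici x₀)) {x : ℝ} (hx : x ≠ x₀) :
    f x₀ < f x := by
  rcases hx.lt_or_gt with hlt | hgt
  · exact hanti hlt.le self_mem_Iic hlt
  · exact hmono self_mem_Ici hgt.le hgt

theorem three_level_cutoff_duration_minimum_general (Λ : ℝ) (hΛ : 0 < Λ)
    (g : ℝ → ℝ) (hg : g = fun β => β / 4 + Λ ^ 2 / (2 * Real.exp β))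
    (βi : ℝ) (hβi : βi = 2 * Real.log Λ + Real.log 2) :
    (∀ β : ℝ, 0 < β →
      β / 2 * (1 / 2 + Λ ^ 2 / (β * Real.exp β)) = g β) ∧
    StrictAntiOn g (Ioo 0 βi) ∧
    StrictMonoOn g (Ioi βi) ∧
    (∀ β : ℝ, 0 < β → β ≠ βi → g βi < g β) := by
  have hg_std : g = fun β => 1 / 4 * β + Λ ^ 2 / 2 / exp β := by
    rw [hg]; ext β; rw [div_div]; ring
  have hβi_log : βi = log (Λ ^ 2 / 2 / (1 / 4)) := by
    rw [hβi, show Λ ^ 2 / 2 / (1 / 4) = 2 * Λ ^ 2 by ring, log_mul two_ne_zero (by positivity),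
      log_pow]
    push_cast
    ring
  have hb : 0 < Λ ^ 2 / 2 := by positivity
  have hanti := strictAntiOn_mul_add_div_exp (by norm_num : (0 : ℝ) < 1 / 4) hb
  have hmono := strictMonoOn_mul_add_div_exp (by norm_num : (0 : ℝ) < 1 / 4) hb
  rw [← hβi_log, ← hg_std] at hanti hmono
  refine ⟨fun β hβ => ?_, hanti.mono (Ioo_subset_Iio_self.trans Iio_subset_Iic_self),
    hmono.mono Ioi_subset_Ici_self,
    fun β _ hne => lt_of_strictAntiOn_Iic_of_strictMonoOn_Ici hanti hmono hne⟩
  rw [hg]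
  field_simp
  ring

/-- For `Λ > 0` with `2Λ² > 1`, the leading-order cut-off mean duration
`g(β) = (β/2)(1/2 + Λ²/(β e^β)) = β/4 + Λ²/(2 e^β)` attains a strict global minimum
on `(0,∞)` at `β_i = 2 ln Λ + ln 2`: it is strictly decreasing on `(0, β_i)` and
strictly increasing on `(β_i, ∞)`. -/
theorem three_level_cutoff_duration_minimum (Λ : ℝ) (hΛ : 0 < Λ)
    (hΛ2 : 1 < 2 * Λ ^ 2)
    (g : ℝ → ℝ) (hg : g = fun β => β / 4 + Λ ^ 2 / (2 * Real.exp β))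
    (βi : ℝ) (hβi : βi = 2 * Real.log Λ + Real.log 2) :
    (∀ β : ℝ, 0 < β →
      β / 2 * (1 / 2 + Λ ^ 2 / (β * Real.exp β)) = g β) ∧
    StrictAntiOn g (Ioo 0 βi) ∧
    StrictMonoOn g (Ioi βi) ∧
    (∀ β : ℝ, 0 < β → β ≠ βi → g βi < g β) :=
  three_level_cutoff_duration_minimum_general Λ hΛ g hg βi hβi
end

section
/- Let A, B, C > 0 with A + B ≠ C, and set g₁ = B/(A+B−C), g₂ = (BC + A(C − (A+B)))/((A+B)(A+B−C)). Define the absorption probability p(t) = 1 − g₁ e^{−Ct} + g₂ e^{−(A+B)t}. Then p(0) = 0, p is nondecreasing on [0, ∞), and p(t) → 1 as t → ∞; i.e. p is the cumulative distribution function of the duration of reactive trajectories, and absorption in state 2 is certain. -/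
/-!
Differentiating, `p' t = B C (e^{-Ct} - e^{-(A+B)t}) / (A+B-C) + A e^{-(A+B)t}`. The first term
is nonnegative for `t ≥ 0` whatever the order of `C` and `A+B`, because a difference of two
decaying exponentials has the sign of the difference of their rates; hence `p` is nondecreasing.
Both exponentials decay, so `p → 1`, and `p 0 = 0` is an identity between `g₁` and `g₂`.
-/

open Real Filter Topology Set

lemma tendsto_exp_neg_mul_atTop_nhds_zero {c : ℝ} (hc : 0 < c) :
    Tendsto (fun t => exp (-c * t)) atTop (𝓝 0) := by
  simpa only [Function.comp_def, neg_mul, id_eq] using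
    tendsto_exp_neg_atTop_nhds_zero.comp (tendsto_id.const_mul_atTop hc)

lemma exp_neg_mul_sub_exp_neg_mul_div_nonneg (c d : ℝ) {t : ℝ} (ht : 0 ≤ t) :
    0 ≤ (exp (-c * t) - exp (-d * t)) / (d - c) := by
  rcases le_total c d with hcd | hdc
  · exact div_nonneg (sub_nonneg.mpr (exp_le_exp.mpr (by nlinarith))) (sub_nonneg.mpr hcd)
  · exact div_nonneg_of_nonpos (sub_nonpos.mpr (exp_le_exp.mpr (by nlinarith)))
      (sub_nonpos.mpr hdc)

section ExpCombination

variable (a b c d : ℝ)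

lemma hasDerivAt_one_sub_mul_exp_add_mul_exp (t : ℝ) :
    HasDerivAt (fun t => 1 - a * exp (-c * t) + b * exp (-d * t))
      (a * c * exp (-c * t) - b * d * exp (-d * t)) t := by
  have hexp (k : ℝ) : HasDerivAt (fun t => exp (-k * t)) (exp (-k * t) * -k) t := by
    simpa using ((hasDerivAt_id t).const_mul (-k)).exp
  refine (((hasDerivAt_const t 1).sub ((hexp c).const_mul a)).add
    ((hexp d).const_mul b)).congr_deriv ?_
  ring

lemma tendsto_one_sub_mul_exp_add_mul_exp {c d : ℝ} (hc : 0 < c) (hd : 0 < d) :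
    Tendsto (fun t => 1 - a * exp (-c * t) + b * exp (-d * t)) atTop (𝓝 1) := by
  simpa using ((tendsto_exp_neg_mul_atTop_nhds_zero hc).const_mul a).const_sub 1
    |>.add ((tendsto_exp_neg_mul_atTop_nhds_zero hd).const_mul b)

end ExpCombination

lemma monotoneOn_Ici_of_hasDerivAt_nonneg {f f' : ℝ → ℝ} {a : ℝ}
    (hf : ∀ t, HasDerivAt f (f' t) t) (hf' : ∀ t, a < t → 0 ≤ f' t) :
    MonotoneOn f (Ici a) :=
  monotoneOn_of_hasDerivWithinAt_nonneg (convex_Ici a)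
    (fun t _ => (hf t).continuousAt.continuousWithinAt)
    (fun t _ => (hf t).hasDerivWithinAt) (by simpa using hf')

/-- The absorption probability of the three-level model,
`p(t) = 1 − g₁ e^{−Ct} + g₂ e^{−(A+B)t}`, satisfies `p(0) = 0`, is nondecreasing
on `[0,∞)`, and tends to `1` as `t → ∞`: it is the cumulative distribution function
of the duration of reactive trajectories, and absorption in state 2 is certain. -/
theorem three_level_absorption_cdf (A B C : ℝ)
    (hA : 0 < A) (hB : 0 < B) (hC : 0 < C) (hABC : A + B ≠ C)
    (g₁ g₂ : ℝ)
    (hg₁ : g₁ = B / (A + B - C))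
    (hg₂ : g₂ = (B * C + A * (C - (A + B))) / ((A + B) * (A + B - C)))
    (p : ℝ → ℝ)
    (hp : p = fun t => 1 - g₁ * Real.exp (-C * t) + g₂ * Real.exp (-(A + B) * t)) :
    p 0 = 0 ∧
    MonotoneOn p (Set.Ici (0 : ℝ)) ∧
    Tendsto p atTop (nhds 1) := by
  subst hp hg₁ hg₂
  have hS : 0 < A + B := by positivity
  have hD : A + B - C ≠ 0 := sub_ne_zero.mpr hABC
  have hdensity (t : ℝ) :
      B / (A + B - C) * C * exp (-C * t) - (B * C + A * (C - (A + B))) /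
          ((A + B) * (A + B - C)) * (A + B) * exp (-(A + B) * t) =
        B * C * ((exp (-C * t) - exp (-(A + B) * t)) / (A + B - C)) +
          A * exp (-(A + B) * t) := by
    field_simp
    ring
  refine ⟨?_, ?_, tendsto_one_sub_mul_exp_add_mul_exp _ _ hC hS⟩
  · simp only [mul_zero, exp_zero, mul_one]
    field_simp
    ring
  · refine monotoneOn_Ici_of_hasDerivAt_nonneg (hasDerivAt_one_sub_mul_exp_add_mul_exp _ _ _ _)
      fun t ht => ?_
    rw [hdensity]
    exact add_nonneg
      (mul_nonneg (by positivity) (exp_neg_mul_sub_exp_neg_mul_div_nonneg _ _ ht.le))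
      (by positivity)
end
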